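/- arXiv:1809.06684 — 5 statements merged into one kernel-verified Lean document; each statement's English description precedes it below -/
import Mathlib

section
/- Let D be a dictionary of K unit-norm atoms in ℝ^d with coherence μ = max_{j≠k} |⟨a_j, a_k⟩|, let J be an index set with δ_J := ‖D_J*D_J − I‖ ≤ δ < 1, and let a_k be an atom with k ∉ J. Then the squared norm of the residual after projecting a_k away from span(D_J) satisfies ‖(I − P(D_J)) a_k‖² ≥ 1 − |J|μ²/(1−δ), where P(D_J) is the orthogonal projection onto the column span of D_J. -/
/-!
Write the projection `p` of `a k` onto `span (a '' J)` as `p = ∑ i ∈ J, xᵢ aᵢ`. The Gram bound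
`δ_J ≤ δ` gives `(1 - δ) ‖x‖² ≤ ‖p‖²`, while `‖p‖² = ⟪p, a k⟫ = ∑ xᵢ ⟪aᵢ, a k⟫`, so by
Cauchy–Schwarz `‖p‖⁴ ≤ ‖x‖² ∑ ⟪aᵢ, a k⟫² ≤ ‖p‖² |J| μ² / (1 - δ)`. Pythagoras
`‖a k - p‖² = 1 - ‖p‖²` finishes.
-/

open scoped RealInnerProductSpace

open Finset Matrix Submodule

theorem ContinuousLinearMap.abs_real_inner_apply_self_le {F : Type*} [NormedAddCommGroup F]
    [InnerProductSpace ℝ F] (T : F →L[ℝ] F) {δ : ℝ} (hT : ‖T‖ ≤ δ) (y : F) :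
    |⟪T y, y⟫| ≤ δ * ‖y‖ ^ 2 :=
  calc |⟪T y, y⟫| ≤ ‖T y‖ * ‖y‖ := abs_real_inner_le_norm _ _
    _ ≤ δ * ‖y‖ * ‖y‖ := by gcongr; exact T.le_of_opNorm_le hT y
    _ = δ * ‖y‖ ^ 2 := by ring

section

variable {E : Type*} [NormedAddCommGroup E] [InnerProductSpace ℝ E] {ι : Type*} [Fintype ι]

theorem inner_toEuclideanCLM_gram_sub_one [DecidableEq ι] (v : ι → E) (x : ι → ℝ) :
    ⟪toEuclideanCLM (𝕜 := ℝ) (gram ℝ v - 1) (WithLp.toLp 2 x), WithLp.toLp 2 x⟫ =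
      ‖∑ i, x i • v i‖ ^ 2 - ∑ i, x i ^ 2 := by
  rw [toEuclideanCLM_toLp, real_inner_comm, EuclideanSpace.inner_toLp_toLp, star_trivial,
    sub_mulVec, one_mulVec, sub_dotProduct, dotProduct_comm, ← star_trivial x,
    star_dotProduct_gram_mulVec]
  simp only [star_trivial, real_inner_self_eq_norm_sq, dotProduct, pow_two]

theorem mul_sum_sq_le_norm_sum_smul_sq [DecidableEq ι] (v : ι → E) {δ : ℝ}
    (hδ : ‖toEuclideanCLM (𝕜 := ℝ) (n := ι) (gram ℝ v - 1)‖ ≤ δ) (x : ι → ℝ) :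
    (1 - δ) * ∑ i, x i ^ 2 ≤ ‖∑ i, x i • v i‖ ^ 2 := by
  have h := ContinuousLinearMap.abs_real_inner_apply_self_le _ hδ (WithLp.toLp 2 x)
  rw [inner_toEuclideanCLM_gram_sub_one, EuclideanSpace.norm_sq_eq] at h
  simp only [Real.norm_eq_abs, sq_abs] at h
  linarith [neg_abs_le (‖∑ i, x i • v i‖ ^ 2 - ∑ i, x i ^ 2)]

theorem norm_starProjection_span_sq_le (v : ι → E)
    [(span ℝ (Set.range v)).HasOrthogonalProjection] {c : ℝ} (hc : 0 < c)
    (hv : ∀ x : ι → ℝ, c * ∑ i, x i ^ 2 ≤ ‖∑ i, x i • v i‖ ^ 2) (u : E) :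
    ‖(span ℝ (Set.range v)).starProjection u‖ ^ 2 ≤ (∑ i, ⟪v i, u⟫ ^ 2) / c := by
  obtain ⟨x, hx⟩ := (mem_span_range_iff_exists_fun ℝ).1 <|
    starProjection_apply_mem (span ℝ (Set.range v)) u
  have hPu : ‖(span ℝ (Set.range v)).starProjection u‖ ^ 2 = ∑ i, x i * ⟪v i, u⟫ := by
    have h := re_inner_starProjection_eq_normSq (span ℝ (Set.range v)) u
    rw [RCLike.re_to_real, ← hx, sum_inner, coe_norm, ← starProjection_apply] at h
    simpa only [real_inner_smul_left] using h.symm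
  have hcs : (‖(span ℝ (Set.range v)).starProjection u‖ ^ 2) ^ 2 ≤
      (∑ i, x i ^ 2) * ∑ i, ⟪v i, u⟫ ^ 2 :=
    hPu ▸ sum_mul_sq_le_sq_mul_sq _ _ _
  have hx2 : c * ∑ i, x i ^ 2 ≤ ‖(span ℝ (Set.range v)).starProjection u‖ ^ 2 := hx ▸ hv x
  have hB : 0 ≤ ∑ i, ⟪v i, u⟫ ^ 2 := by positivity
  rw [le_div_iff₀ hc]
  rcases (sq_nonneg ‖(span ℝ (Set.range v)).starProjection u‖).eq_or_lt with h0 | hpos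
  · rw [← h0, zero_mul]
    exact hB
  · by_contra! h
    nlinarith [mul_lt_mul_of_pos_left h hpos, mul_le_mul_of_nonneg_right hx2 hB]

end

/-- For unit-norm atoms with coherence `μ`, a subset `J` whose Gram matrix satisfies
`δ_J ≤ δ < 1`, and `k ∉ J`, the residual of `a k` after projecting onto the span of the
atoms in `J` satisfies `‖(I − P(D_J)) a k‖² ≥ 1 − |J| μ² / (1 − δ)`. -/
theorem residual_norm_sq_lower_bound {d K : ℕ} (a : Fin K → EuclideanSpace ℝ (Fin d))
    (μ δ : ℝ) (J : Finset (Fin K)) (k : Fin K)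
    (hnorm : ∀ i, ‖a i‖ = 1)
    (hμ : ∀ i j, i ≠ j → |⟪a i, a j⟫| ≤ μ)
    (hδ : ‖Matrix.toEuclideanCLM (𝕜 := ℝ) (n := ↥J)
        ((Matrix.of fun i j : ↥J => ⟪a i, a j⟫) - 1)‖ ≤ δ)
    (hδ1 : δ < 1) (hk : k ∉ J) :
    1 - J.card * μ ^ 2 / (1 - δ) ≤
      ‖a k - (Submodule.orthogonalProjectionOnto (Submodule.span ℝ (a '' ↑J)) (a k) :
        EuclideanSpace ℝ (Fin d))‖ ^ 2 := by
  -- index by the `Finset` subtype `↥J` of the Gram matrix, not by `↥(↑J : Set (Fin K))`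
  have hrange : a '' ↑J = Set.range fun i : J => a i := Set.image_eq_range a ↑J
  rw [hrange, ← starProjection_apply]
  have hproj := norm_starProjection_span_sq_le (fun i : J => a i) (sub_pos.2 hδ1)
    (mul_sum_sq_le_norm_sum_smul_sq _ hδ) (a k)
  have hcoherence : ∑ i : J, ⟪a i, a k⟫ ^ 2 ≤ J.card * μ ^ 2 :=
    calc ∑ i : J, ⟪a i, a k⟫ ^ 2 ≤ ∑ _i : J, μ ^ 2 := by
          refine sum_le_sum fun i _ => ?_
          rw [← sq_abs]
          exact pow_le_pow_left₀ (abs_nonneg _) (hμ _ _ (ne_of_mem_of_not_mem i.2 hk)) 2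
      _ = J.card * μ ^ 2 := by simp
  have hpyth := norm_sq_eq_add_norm_sq_starProjection (a k) (span ℝ (Set.range fun i : J => a i))
  rw [starProjection_orthogonal_val, hnorm, one_pow] at hpyth
  calc 1 - J.card * μ ^ 2 / (1 - δ) ≤ 1 - (∑ i : J, ⟪a i, a k⟫ ^ 2) / (1 - δ) := by gcongr
    _ ≤ _ := by linarith
end

section
/- With the same setup (unit-norm atoms, coherence μ, index set J with δ_J ≤ δ < 1), for any two indices i, k ∉ J with i ≠ k, we have |⟨a_k, (I − P(D_J)) a_i⟩| ≤ μ + |J|μ²/(1−δ). -/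
/-!
Write the projection of `a i` onto the span of the atoms in `J` as `∑ j, c j • a j`. Pairing with
`a l` for `l ∈ J` shows that `c` solves the Gram system `G c = b`, where `b l = ⟪a l, a i⟫`; since
`‖G - 1‖ ≤ δ < 1`, this forces `(1 - δ) ‖c‖ ≤ ‖b‖ ≤ √|J| μ` without ever inverting `G`. Finally
`⟪a k, (I - P) a i⟫ = ⟪a k, a i⟫ - ∑ j, c j ⟪a k, a j⟫`, and Cauchy–Schwarz bounds the sum by
`√|J| μ ‖c‖`.
-/

open scoped RealInnerProductSpace

open Matrix

theorem ContinuousLinearMap.one_sub_mul_norm_le_norm_apply {𝕜 E : Type*}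
    [NontriviallyNormedField 𝕜] [SeminormedAddCommGroup E] [NormedSpace 𝕜 E] {T : E →L[𝕜] E}
    {δ : ℝ} (hT : ‖T - 1‖ ≤ δ) (x : E) : (1 - δ) * ‖x‖ ≤ ‖T x‖ := by
  have : ‖x - T x‖ ≤ δ * ‖x‖ := by
    rw [← norm_neg, neg_sub]
    exact (T - 1).le_opNorm x |>.trans (by gcongr)
  linarith [norm_le_norm_add_norm_sub' x (T x)]

theorem EuclideanSpace.norm_le_sqrt_card_mul {ι : Type*} [Fintype ι] {x : EuclideanSpace ℝ ι}
    {μ : ℝ} (hμ : 0 ≤ μ) (hx : ∀ j, |x j| ≤ μ) : ‖x‖ ≤ √(Fintype.card ι) * μ := by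
  calc ‖x‖ = √(∑ j, ‖x j‖ ^ 2) := EuclideanSpace.norm_eq x
    _ ≤ √(∑ _j : ι, μ ^ 2) := by gcongr with j; exact hx j
    _ = √(Fintype.card ι) * μ := by
      rw [Finset.sum_const, Finset.card_univ, nsmul_eq_mul, Real.sqrt_mul (Nat.cast_nonneg _),
        Real.sqrt_sq hμ]

section StarProjectionCoeff

variable {E ι : Type*} [NormedAddCommGroup E] [InnerProductSpace ℝ E] [Fintype ι]
  {K : Submodule ℝ E} [K.HasOrthogonalProjection] {v : ι → E} {x : E} {c : ι → ℝ}

theorem Matrix.gram_mulVec_eq_inner_of_starProjection_eq_sum (hv : ∀ j, v j ∈ K)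
    (hc : K.starProjection x = ∑ j, c j • v j) :
    gram ℝ v *ᵥ c = fun l ↦ ⟪v l, x⟫ := by
  ext l
  calc (gram ℝ v *ᵥ c) l = ⟪v l, ∑ j, c j • v j⟫ := by
        simp [mulVec, dotProduct, gram, inner_sum, real_inner_smul_right, mul_comm]
    _ = ⟪v l, x⟫ := by
        rw [← hc, ← Submodule.inner_starProjection_left_eq_right,
          Submodule.starProjection_eq_self_iff.mpr (hv l)]

theorem norm_coeff_le_of_starProjection_eq_sum [DecidableEq ι] (hv : ∀ j, v j ∈ K)
    (hc : K.starProjection x = ∑ j, c j • v j) {δ : ℝ}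
    (hδ : ‖toEuclideanCLM (𝕜 := ℝ) (gram ℝ v) - 1‖ ≤ δ) (hδ1 : δ < 1) :
    ‖WithLp.toLp 2 c‖ ≤ ‖(WithLp.toLp 2 fun l ↦ ⟪v l, x⟫ : EuclideanSpace ℝ ι)‖ / (1 - δ) := by
  rw [le_div_iff₀' (sub_pos.mpr hδ1), ← gram_mulVec_eq_inner_of_starProjection_eq_sum hv hc]
  exact (toEuclideanCLM (𝕜 := ℝ) (n := ι) (gram ℝ v)).one_sub_mul_norm_le_norm_apply hδ _

end StarProjectionCoeff

theorem inner_residual_upper_bound_general {d K : ℕ} (a : Fin K → EuclideanSpace ℝ (Fin d))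
    (μ δ : ℝ) (J : Finset (Fin K)) (i k : Fin K)
    (hμ : ∀ j j', j ≠ j' → |⟪a j, a j'⟫| ≤ μ)
    (hδ : ‖Matrix.toEuclideanCLM (𝕜 := ℝ) (n := ↥J)
        ((Matrix.of fun j j' : ↥J => ⟪a j, a j'⟫) - 1)‖ ≤ δ)
    (hδ1 : δ < 1) (hi : i ∉ J) (hk : k ∉ J) (hik : i ≠ k) :
    |⟪a k, a i - (Submodule.orthogonalProjectionOnto (Submodule.span ℝ (a '' ↑J)) (a i) :
        EuclideanSpace ℝ (Fin d))⟫| ≤ μ + J.card * μ ^ 2 / (1 - δ) := by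
  set V := Submodule.span ℝ (a '' ↑J)
  have hμ0 : 0 ≤ μ := (abs_nonneg _).trans (hμ i k hik)
  have hcoh (m : Fin K) (hm : m ∉ J) : ‖(WithLp.toLp 2 fun j : J ↦ ⟪a j, a m⟫ :
      EuclideanSpace ℝ J)‖ ≤ √J.card * μ := by
    simpa using EuclideanSpace.norm_le_sqrt_card_mul hμ0 fun j : J ↦ hμ j m fun h ↦ hm (h ▸ j.2)
  obtain ⟨c, hc⟩ := (Fintype.mem_span_image_iff_exists_fun ℝ).mp (V.starProjection_apply_mem (a i))
  have hc_norm : ‖WithLp.toLp 2 c‖ ≤ √J.card * μ / (1 - δ) := by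
    rw [map_sub, map_one] at hδ
    refine (norm_coeff_le_of_starProjection_eq_sum (v := fun j : J ↦ a j)
      (fun j ↦ Submodule.subset_span (Set.mem_image_of_mem a j.2)) hc.symm hδ hδ1).trans ?_
    gcongr
    exact hcoh i hi
  set w : EuclideanSpace ℝ J := WithLp.toLp 2 fun j ↦ ⟪a j, a k⟫
  have hres : ⟪a k, a i - (V.orthogonalProjectionOnto (a i) : EuclideanSpace ℝ (Fin d))⟫ =
      ⟪a k, a i⟫ - ⟪w, WithLp.toLp 2 c⟫ := by
    rw [Submodule.coe_orthogonalProjectionOnto_apply, ← hc, inner_sub_right, inner_sum]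
    simp [w, EuclideanSpace.inner_toLp_toLp, dotProduct, real_inner_smul_right, real_inner_comm]
  calc |⟪a k, a i - (V.orthogonalProjectionOnto (a i) : EuclideanSpace ℝ (Fin d))⟫|
      ≤ |⟪a k, a i⟫| + |⟪w, WithLp.toLp 2 c⟫| := hres ▸ abs_sub _ _
    _ ≤ μ + ‖w‖ * ‖WithLp.toLp 2 c‖ := add_le_add (hμ k i hik.symm) (abs_real_inner_le_norm _ _)
    _ ≤ μ + √J.card * μ * (√J.card * μ / (1 - δ)) := by gcongr; exact hcoh k hk
    _ = μ + J.card * μ ^ 2 / (1 - δ) := by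
      rw [mul_div_assoc', mul_mul_mul_comm, Real.mul_self_sqrt J.card.cast_nonneg, sq]

/-- For unit-norm atoms with coherence `μ` and `δ_J ≤ δ < 1`, for indices `i, k ∉ J`
with `i ≠ k` we have `|⟨a k, (I − P(D_J)) a i⟩| ≤ μ + |J| μ² / (1 − δ)`. -/
theorem inner_residual_upper_bound {d K : ℕ} (a : Fin K → EuclideanSpace ℝ (Fin d))
    (μ δ : ℝ) (J : Finset (Fin K)) (i k : Fin K)
    (hnorm : ∀ j, ‖a j‖ = 1)
    (hμ : ∀ j j', j ≠ j' → |⟪a j, a j'⟫| ≤ μ)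
    (hδ : ‖Matrix.toEuclideanCLM (𝕜 := ℝ) (n := ↥J)
        ((Matrix.of fun j j' : ↥J => ⟪a j, a j'⟫) - 1)‖ ≤ δ)
    (hδ1 : δ < 1) (hi : i ∉ J) (hk : k ∉ J) (hik : i ≠ k) :
    |⟪a k, a i - (Submodule.orthogonalProjectionOnto (Submodule.span ℝ (a '' ↑J)) (a i) :
        EuclideanSpace ℝ (Fin d))⟫| ≤ μ + J.card * μ ^ 2 / (1 - δ) :=
  inner_residual_upper_bound_general a μ δ J i k hμ hδ hδ1 hi hk hik
end

section
/- With the same setup, for any index k ∉ J, vector coefficient x supported on a set Z disjoint from J, we have |⟨a_k, P(D_J) D_Z x_Z⟩| ≤ (|J| μ/(1−δ)) · max_{j ∉ Z} |⟨a_j, D_Z x_Z⟩|. -/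
/-!
Write `P(D_J) v = ∑_{j ∈ J} c_j a_j` with `v = D_Z x_Z`. Since `v - P(D_J) v` is orthogonal to
the atoms of `J`, the coefficients solve the normal equations `G_J c = D_J* v`, so
`‖G_J - I‖ ≤ δ < 1` gives `‖c‖₂ ≤ ‖D_J* v‖₂ / (1 - δ) ≤ √|J| C / (1 - δ)`; the entries of `D_J* v`
are bounded by `C` because `J` and `Z` are disjoint. Coherence and Cauchy–Schwarz then give
`|⟨a_k, P(D_J) v⟩| ≤ μ ‖c‖₁ ≤ μ √|J| ‖c‖₂`.
-/

open scoped RealInnerProductSpace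

open Matrix WithLp

theorem norm_le_div_one_sub_of_norm_sub_le {E : Type*} [SeminormedAddCommGroup E] {b c : E}
    {δ : ℝ} (hbc : ‖b - c‖ ≤ δ * ‖c‖) (hδ : δ < 1) : ‖c‖ ≤ ‖b‖ / (1 - δ) := by
  rw [le_div_iff₀ (sub_pos.2 hδ)]
  have := norm_sub_norm_le c (c - b)
  rw [sub_sub_cancel, norm_sub_rev] at this
  linarith

theorem Matrix.norm_toLp_le_div_of_opNorm_sub_one_le {ι 𝕜 : Type*} [Fintype ι] [DecidableEq ι]
    [RCLike 𝕜] {A : Matrix ι ι 𝕜} {δ : ℝ} (hA : ‖toEuclideanCLM (n := ι) (𝕜 := 𝕜) (A - 1)‖ ≤ δ)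
    (hδ : δ < 1) (c : ι → 𝕜) : ‖toLp 2 c‖ ≤ ‖toLp 2 (A *ᵥ c)‖ / (1 - δ) := by
  refine norm_le_div_one_sub_of_norm_sub_le ?_ hδ
  calc ‖toLp 2 (A *ᵥ c) - toLp 2 c‖ = ‖toEuclideanCLM (n := ι) (𝕜 := 𝕜) (A - 1) (toLp 2 c)‖ := by
        rw [toEuclideanCLM_toLp, sub_mulVec, one_mulVec, toLp_sub]
    _ ≤ δ * ‖toLp 2 c‖ := (ContinuousLinearMap.le_opNorm _ _).trans (by gcongr)

theorem EuclideanSpace.norm_le_sqrt_card_mul_of_forall_abs_le {ι : Type*} [Fintype ι]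
    {b : EuclideanSpace ℝ ι} {C : ℝ} (hb : ∀ i, |b i| ≤ C) : ‖b‖ ≤ √(Fintype.card ι) * C := by
  obtain _ | ⟨⟨i⟩⟩ := isEmpty_or_nonempty ι
  · simp [Subsingleton.elim b 0]
  have hC : 0 ≤ C := (abs_nonneg _).trans (hb i)
  calc ‖b‖ = √(∑ i, b i ^ 2) := by simp [EuclideanSpace.norm_eq]
    _ ≤ √(∑ _i : ι, C ^ 2) :=
      Real.sqrt_le_sqrt (Finset.sum_le_sum fun i _ => sq_le_sq' (abs_le.1 (hb i)).1 (abs_le.1 (hb i)).2)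
    _ = √(Fintype.card ι) * C := by simp [Real.sqrt_mul, hC]

theorem EuclideanSpace.sum_abs_le_sqrt_card_mul_norm {ι : Type*} [Fintype ι]
    (c : EuclideanSpace ℝ ι) : ∑ i, |c i| ≤ √(Fintype.card ι) * ‖c‖ := by
  simpa [EuclideanSpace.norm_eq] using Real.sum_mul_le_sqrt_mul_sqrt Finset.univ 1 (|c ·|)

theorem abs_inner_sum_smul_le_mul_sum_abs {ι E : Type*} [Fintype ι] [NormedAddCommGroup E]
    [InnerProductSpace ℝ E] {w : E} {a : ι → E} {μ : ℝ} (hμ : ∀ i, |⟪w, a i⟫| ≤ μ) (c : ι → ℝ) :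
    |⟪w, ∑ i, c i • a i⟫| ≤ μ * ∑ i, |c i| := by
  rw [inner_sum, Finset.mul_sum]
  refine (Finset.abs_sum_le_sum_abs _ _).trans (Finset.sum_le_sum fun i _ => ?_)
  rw [real_inner_smul_right, abs_mul, mul_comm μ]
  exact mul_le_mul_of_nonneg_left (hμ i) (abs_nonneg _)

theorem exists_orthogonalProjectionOnto_span_range_eq_sum_and_gram_mulVec {ι 𝕜 E : Type*}
    [Fintype ι] [RCLike 𝕜] [NormedAddCommGroup E] [InnerProductSpace 𝕜 E] (a : ι → E)
    [(Submodule.span 𝕜 (Set.range a)).HasOrthogonalProjection] (v : E) :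
    ∃ c : ι → 𝕜, ((Submodule.span 𝕜 (Set.range a)).orthogonalProjectionOnto v : E) =
      ∑ i, c i • a i ∧ gram 𝕜 a *ᵥ c = fun i => inner 𝕜 (a i) v := by
  set K := Submodule.span 𝕜 (Set.range a)
  obtain ⟨c, hc⟩ := (Submodule.mem_span_range_iff_exists_fun 𝕜).1 (K.orthogonalProjectionOnto v).2
  refine ⟨c, hc.symm, funext fun i => ?_⟩
  have hai : a i ∈ K := Submodule.subset_span ⟨i, rfl⟩
  have horth := Submodule.inner_right_of_mem_orthogonal hai (K.sub_starProjection_mem_orthogonal v)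
  rw [inner_sub_right, sub_eq_zero, ← Submodule.coe_orthogonalProjectionOnto_apply, ← hc,
    inner_sum] at horth
  simp [horth, mulVec, dotProduct, gram, inner_smul_right, mul_comm]

theorem inner_projection_signal_bound_general {d K : ℕ} (a : Fin K → EuclideanSpace ℝ (Fin d))
    (μ δ C : ℝ) (J Z : Finset (Fin K)) (k : Fin K) (x : Fin K → ℝ)
    (hμ : ∀ j j', j ≠ j' → |⟪a j, a j'⟫| ≤ μ)
    (hδ : ‖Matrix.toEuclideanCLM (𝕜 := ℝ) (n := ↥J)
        ((Matrix.of fun j j' : ↥J => ⟪a j, a j'⟫) - 1)‖ ≤ δ)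
    (hδ1 : δ < 1) (hk : k ∉ J) (hJZ : Disjoint J Z)
    (hC : ∀ j, j ∉ Z → |⟪a j, ∑ z ∈ Z, x z • a z⟫| ≤ C) :
    |⟪a k, (Submodule.orthogonalProjectionOnto (Submodule.span ℝ (a '' ↑J)) (∑ z ∈ Z, x z • a z) :
        EuclideanSpace ℝ (Fin d))⟫| ≤ J.card * μ / (1 - δ) * C := by
  rcases J.eq_empty_or_nonempty with rfl | ⟨j₀, hj₀⟩
  · simp
  have hμ₀ : 0 ≤ μ := (abs_nonneg _).trans (hμ k j₀ (ne_of_mem_of_not_mem hj₀ hk).symm)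
  obtain ⟨c, hPc, hGc⟩ := exists_orthogonalProjectionOnto_span_range_eq_sum_and_gram_mulVec
    (𝕜 := ℝ) (fun j : J => a j) (∑ z ∈ Z, x z • a z)
  have hb : ‖toLp 2 (gram ℝ (fun j : J => a j) *ᵥ c)‖ ≤ √J.card * C := by
    rw [hGc, ← Fintype.card_coe]
    exact EuclideanSpace.norm_le_sqrt_card_mul_of_forall_abs_le
      fun j => hC j (Finset.disjoint_left.1 hJZ j.2)
  have hc : ‖toLp 2 c‖ ≤ √J.card * C / (1 - δ) := by
    have := sub_pos.2 hδ1
    exact (norm_toLp_le_div_of_opNorm_sub_one_le hδ hδ1 c).trans (by gcongr; exact hb)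
  rw [show a '' J = Set.range fun j : J => a j by ext; simp, hPc]
  calc |⟪a k, ∑ j : J, c j • a j⟫| ≤ μ * ∑ j, |c j| :=
        abs_inner_sum_smul_le_mul_sum_abs (fun j : J => hμ k j (ne_of_mem_of_not_mem j.2 hk).symm) c
    _ ≤ μ * (√J.card * ‖toLp 2 c‖) := by
        gcongr
        simpa using EuclideanSpace.sum_abs_le_sqrt_card_mul_norm (toLp 2 c)
    _ ≤ μ * (√J.card * (√J.card * C / (1 - δ))) := by gcongr
    _ = J.card * μ / (1 - δ) * C := by
        rw [← mul_div_assoc, ← mul_assoc √_, Real.mul_self_sqrt (Nat.cast_nonneg _)]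
        ring

/-- For unit-norm atoms with coherence `μ`, `δ_J ≤ δ < 1`, `k ∉ J`, and a coefficient
vector supported on a set `Z` disjoint from `J`, if `C` bounds `|⟨a j, D_Z x_Z⟩|` for all
`j ∉ Z`, then `|⟨a k, P(D_J) D_Z x_Z⟩| ≤ (|J| μ / (1 − δ)) · C`. -/
theorem inner_projection_signal_bound {d K : ℕ} (a : Fin K → EuclideanSpace ℝ (Fin d))
    (μ δ C : ℝ) (J Z : Finset (Fin K)) (k : Fin K) (x : Fin K → ℝ)
    (hnorm : ∀ j, ‖a j‖ = 1)
    (hμ : ∀ j j', j ≠ j' → |⟪a j, a j'⟫| ≤ μ)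
    (hδ : ‖Matrix.toEuclideanCLM (𝕜 := ℝ) (n := ↥J)
        ((Matrix.of fun j j' : ↥J => ⟪a j, a j'⟫) - 1)‖ ≤ δ)
    (hδ1 : δ < 1) (hk : k ∉ J) (hJZ : Disjoint J Z)
    (hC : ∀ j, j ∉ Z → |⟪a j, ∑ z ∈ Z, x z • a z⟫| ≤ C) :
    |⟪a k, (Submodule.orthogonalProjectionOnto (Submodule.span ℝ (a '' ↑J)) (∑ z ∈ Z, x z • a z) :
        EuclideanSpace ℝ (Fin d))⟫| ≤ J.card * μ / (1 - δ) * C :=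
  inner_projection_signal_bound_general a μ δ C J Z k x hμ hδ hδ1 hk hJZ hC
end

section
/- Suppose 2Sμ < 1 for a dictionary with coherence μ, and y = ∑_{i∈I} x_i a_i with |I| = S and all x_i ≠ 0. Then for any correct sub-support J ⊊ I, the residual r_J = (I − P(D_J))y is nonzero and max_{i∈I∖J}|⟨a_i, r_J⟩| > max_{k∉I}|⟨a_k, r_J⟩|; consequently OMP recovers the full support I in S steps (worst-case exact recovery condition). -/
/-!
Write the residual as `r = ∑_{i ∈ I} b i • a i`; since the projection lies in the span of the
atoms of `J`, `b` agrees with `x` off `J`, so `b` does not vanish on `I`. Let `i₀ ∈ I` maximise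
`|b i|`, with `B = |b i₀| > 0`. Coherence gives `|⟪a i₀, r⟫| ≥ (1 - (S - 1) μ) B` and
`|⟪a k, r⟫| ≤ S μ B` for `k ∉ I`, and `(2S - 1) μ < 1` makes the first strictly larger.
In particular `⟪a i₀, r⟫ ≠ 0`, so `r ≠ 0`, and `i₀ ∉ J` because `r` is orthogonal to the atoms
of `J`.
-/

open scoped RealInnerProductSpace

theorem exists_sum_smul_eq_sum_smul_sub_of_mem_span_image {ι R M : Type*} [Ring R]
    [AddCommGroup M] [Module R M] (a : ι → M) (x : ι → R) {I J : Finset ι} (hJI : J ⊆ I)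
    {p : M} (hp : p ∈ Submodule.span R (a '' J)) :
    ∃ b : ι → R, ∑ i ∈ I, x i • a i - p = ∑ i ∈ I, b i • a i ∧ ∀ i ∉ J, b i = x i := by
  classical
  obtain ⟨c, rfl⟩ := (Submodule.mem_span_image_finset_iff_exists_fun' (R := R)).mp hp
  refine ⟨fun i => x i - if i ∈ J then c i else 0, ?_, fun i hi => by simp [hi]⟩
  have hc : ∑ i ∈ J, c i • a i = ∑ i ∈ I, (if i ∈ J then c i else 0) • a i := by
    simp only [ite_smul, zero_smul, Finset.sum_ite_mem, Finset.inter_eq_right.mpr hJI]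
  simp only [hc, sub_smul, Finset.sum_sub_distrib]

section Coherence

variable {ι E : Type*} [NormedAddCommGroup E] [InnerProductSpace ℝ E]
  {a : ι → E} {b : ι → ℝ} {μ B : ℝ}

theorem abs_inner_sum_smul_le_card_mul {k : ι} {T : Finset ι}
    (hμ : ∀ i ∈ T, |⟪a k, a i⟫| ≤ μ) (hb : ∀ i ∈ T, |b i| ≤ B) (hB : 0 ≤ B) :
    |⟪a k, ∑ i ∈ T, b i • a i⟫| ≤ T.card * μ * B :=
  calc |⟪a k, ∑ i ∈ T, b i • a i⟫| = |∑ i ∈ T, b i * ⟪a k, a i⟫| := by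
        simp only [inner_sum, real_inner_smul_right]
    _ ≤ ∑ i ∈ T, |b i| * |⟪a k, a i⟫| := by
        simpa only [abs_mul] using Finset.abs_sum_le_sum_abs (fun i => b i * ⟪a k, a i⟫) T
    _ ≤ ∑ _i ∈ T, B * μ :=
        Finset.sum_le_sum fun i hi => mul_le_mul (hb i hi) (hμ i hi) (abs_nonneg _) hB
    _ = T.card * μ * B := by rw [Finset.sum_const, nsmul_eq_mul]; ring

theorem sub_card_mul_le_abs_inner_sum_smul {i : ι} {I : Finset ι} (hi : i ∈ I)
    (hnorm : ‖a i‖ = 1) (hμ : ∀ j ∈ I, j ≠ i → |⟪a i, a j⟫| ≤ μ) (hb : ∀ j ∈ I, |b j| ≤ B)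
    (hB : 0 ≤ B) :
    |b i| - (I.card - 1) * μ * B ≤ |⟪a i, ∑ j ∈ I, b j • a j⟫| := by
  classical
  have hself : ⟪a i, a i⟫ = 1 := by rw [real_inner_self_eq_norm_sq, hnorm, one_pow]
  have hsplit : ⟪a i, ∑ j ∈ I, b j • a j⟫ = b i + ⟪a i, ∑ j ∈ I.erase i, b j • a j⟫ := by
    rw [← Finset.add_sum_erase _ _ hi, inner_add_right, real_inner_smul_right, hself, mul_one]
  have htail := abs_inner_sum_smul_le_card_mul (k := i) (T := I.erase i)
    (fun j hj => hμ j (Finset.mem_of_mem_erase hj) (Finset.ne_of_mem_erase hj))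
    (fun j hj => hb j (Finset.mem_of_mem_erase hj)) hB
  rw [Finset.cast_card_erase_of_mem hi] at htail
  rw [hsplit]
  linarith [abs_sub_abs_le_abs_add (b i) ⟪a i, ∑ j ∈ I.erase i, b j • a j⟫]

theorem exists_abs_inner_sum_smul_gt_of_coherence {I : Finset ι} (hnorm : ∀ i, ‖a i‖ = 1)
    (hμ0 : 0 ≤ μ) (hμ : ∀ i j, i ≠ j → |⟪a i, a j⟫| ≤ μ) (hcond : (2 * I.card - 1) * μ < 1)
    (hb : ∃ i ∈ I, b i ≠ 0) :
    ∃ i ∈ I, 0 < |⟪a i, ∑ j ∈ I, b j • a j⟫| ∧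
      ∀ k ∉ I, |⟪a k, ∑ j ∈ I, b j • a j⟫| < |⟪a i, ∑ j ∈ I, b j • a j⟫| := by
  obtain ⟨i₁, hi₁, hbi₁⟩ := hb
  obtain ⟨i₀, hi₀, hmax⟩ := I.exists_max_image (fun i => |b i|) ⟨i₁, hi₁⟩
  have hB : 0 < |b i₀| := (abs_pos.mpr hbi₁).trans_le (hmax i₁ hi₁)
  have hlow := sub_card_mul_le_abs_inner_sum_smul hi₀ (hnorm i₀)
    (fun j _ hj => hμ i₀ j hj.symm) hmax hB.le
  have hlow_pos : 0 < |b i₀| - (I.card - 1) * μ * |b i₀| := by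
    nlinarith [mul_nonneg (Nat.cast_nonneg (α := ℝ) I.card) hμ0]
  refine ⟨i₀, hi₀, hlow_pos.trans_le hlow, fun k hk => ?_⟩
  have hup := abs_inner_sum_smul_le_card_mul (k := k)
    (fun j hj => hμ k j fun h => hk (h ▸ hj)) hmax hB.le
  nlinarith

end Coherence

/-- Worst-case exact recovery condition for OMP: if `2 S μ < 1`, `y = ∑_{i∈I} x i • a i`
with `|I| = S` and all `x i ≠ 0`, then for any proper sub-support `J ⊊ I` the residual
`r = (I − P(D_J)) y` is nonzero and some atom in `I ∖ J` beats all atoms outside `I`,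
so OMP selects a correct atom at every step. -/
theorem omp_worst_case_recovery {d K : ℕ} (a : Fin K → EuclideanSpace ℝ (Fin d))
    (μ : ℝ) (x : Fin K → ℝ) (I J : Finset (Fin K)) (S : ℕ)
    (r : EuclideanSpace ℝ (Fin d))
    (hnorm : ∀ i, ‖a i‖ = 1)
    (hμ0 : 0 ≤ μ)
    (hμ : ∀ i j, i ≠ j → |⟪a i, a j⟫| ≤ μ)
    (hcard : I.card = S)
    (hcond : 2 * S * μ < 1)
    (hx : ∀ i ∈ I, x i ≠ 0)
    (hJ : J ⊂ I)
    (hr : r = (∑ i ∈ I, x i • a i) -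
      (Submodule.orthogonalProjectionOnto (Submodule.span ℝ (a '' ↑J)) (∑ i ∈ I, x i • a i) :
        EuclideanSpace ℝ (Fin d))) :
    r ≠ 0 ∧ ∃ i ∈ I, i ∉ J ∧ ∀ k, k ∉ I → |⟪a k, r⟫| < |⟪a i, r⟫| := by
  set W := Submodule.span ℝ (a '' ↑J)
  have horth : r ∈ Wᗮ := hr ▸ W.sub_starProjection_mem_orthogonal _
  obtain ⟨b, hrb, hbx⟩ := exists_sum_smul_eq_sum_smul_sub_of_mem_span_image a x hJ.subset
    (W.orthogonalProjectionOnto (∑ i ∈ I, x i • a i)).2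
  obtain rfl : r = ∑ i ∈ I, b i • a i := hr.trans hrb
  obtain ⟨i₁, hi₁I, hi₁J⟩ := Finset.exists_of_ssubset hJ
  obtain ⟨i, hiI, hpos, hbeat⟩ := exists_abs_inner_sum_smul_gt_of_coherence hnorm hμ0 hμ
    (by subst hcard; linarith) ⟨i₁, hi₁I, hbx i₁ hi₁J ▸ hx i₁ hi₁I⟩
  have hiJ : i ∉ J := fun hiJ => hpos.ne' <| by
    rw [W.inner_right_of_mem_orthogonal (Submodule.subset_span (Set.mem_image_of_mem a hiJ))
      horth, abs_zero]
  exact ⟨fun h0 => by simp [h0] at hpos, i, hiI, hiJ, hbeat⟩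
end

section
/- Let c_{Z} be the tail (c_k)_{k ≥ i+T} of a sequence satisfying c_{i+t} ≤ (1−λ/S)c_i, with T = t⌈S/λ⌉, 0 < λ ≤ S, t ∈ ℕ₊. If additionally 1 − (1−λ/S)² ≥ λ/S, then ‖c_Z‖₂ ≤ c_i e^{−1} √(tS/λ). (The hypothesis 1−(1−λ/S)² ≥ λ/S holds automatically since λ/S ∈ (0,1].) -/
/-! With `q = 1 - λ/S`, the decay and monotonicity give `c (a + m) ≤ q ^ ⌊m / t⌋ * c a`, so the
squared tail from `N = i + t⌈S/λ⌉` is dominated by `c N ^ 2` times `t` interleaved copies of the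
geometric series in `q²`, which sums to `t / (1 - q²) ≤ t S / λ`. Since `1 - x ≤ e⁻ˣ`,
`c N ≤ q ^ ⌈S/λ⌉ * c i ≤ e⁻¹ * c i`. -/

open Real

theorem le_pow_mul_of_add_le_mul {c : ℕ → ℝ} {t : ℕ} {q : ℝ} (hq : 0 ≤ q)
    (hdecay : ∀ n, c (n + t) ≤ q * c n) (a n : ℕ) : c (a + t * n) ≤ q ^ n * c a := by
  induction n with
  | zero => simp
  | succ n ih =>
    calc c (a + t * (n + 1)) = c (a + t * n + t) := by ring_nf
      _ ≤ q * c (a + t * n) := hdecay _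
      _ ≤ q * (q ^ n * c a) := mul_le_mul_of_nonneg_left ih hq
      _ = q ^ (n + 1) * c a := by ring

theorem Antitone.le_pow_div_mul_of_add_le_mul {c : ℕ → ℝ} (hmono : Antitone c) {t : ℕ} {q : ℝ}
    (hq : 0 ≤ q) (hdecay : ∀ n, c (n + t) ≤ q * c n) (a m : ℕ) :
    c (a + m) ≤ q ^ (m / t) * c a :=
  (hmono (by grw [Nat.mul_div_le m t])).trans (le_pow_mul_of_add_le_mul hq hdecay a (m / t))

theorem one_sub_pow_ceil_inv_le_exp_neg_one {x : ℝ} (hx0 : 0 < x) (hx1 : x ≤ 1) :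
    (1 - x) ^ ⌈x⁻¹⌉₊ ≤ exp (-1) :=
  calc (1 - x) ^ ⌈x⁻¹⌉₊ ≤ exp (-x) ^ ⌈x⁻¹⌉₊ :=
        pow_le_pow_left₀ (by linarith) (one_sub_le_exp_neg x) _
    _ = exp (-(x * ⌈x⁻¹⌉₊)) := by rw [← exp_nat_mul]; ring_nf
    _ ≤ exp (-1) := by
        gcongr
        calc (1 : ℝ) = x * x⁻¹ := (mul_inv_cancel₀ hx0.ne').symm
          _ ≤ x * ⌈x⁻¹⌉₊ := by gcongr; exact Nat.le_ceil _

theorem hasSum_pow_div {r : ℝ} (hr0 : 0 ≤ r) (hr1 : r < 1) {t : ℕ} (ht : 0 < t) :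
    HasSum (fun m => r ^ (m / t)) ((1 - r)⁻¹ * t) := by
  have : NeZero t := ⟨ht.ne'⟩
  have hprod := (hasSum_geometric_of_lt_one hr0 hr1).mul (hasSum_fintype fun _ : Fin t => (1 : ℝ))
    ((summable_geometric_of_lt_one hr0 hr1).mul_of_nonneg Summable.of_finite
      (fun n => by positivity) (fun _ => zero_le_one))
  have hcomp : (fun m => r ^ (m / t)) ∘ (Nat.divModEquiv t).symm = fun p => r ^ p.1 * 1 := by
    funext ⟨n, j⟩
    simp [Nat.divModEquiv, mul_comm n t, Nat.mul_add_div ht, Nat.div_eq_of_lt j.isLt]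
  rw [← (Nat.divModEquiv t).symm.hasSum_iff, hcomp]
  simpa using hprod

theorem tsum_subtype_le_eq_tsum_add {M : Type*} [AddCommMonoid M] [TopologicalSpace M]
    (f : ℕ → M) (N : ℕ) : ∑' k : {k : ℕ // N ≤ k}, f k = ∑' m, f (N + m) :=
  (Equiv.tsum_eq (β := {k : ℕ // N ≤ k})
    { toFun := fun m => ⟨N + m, Nat.le_add_right N m⟩
      invFun := fun k => k.1 - N
      left_inv := fun m => by simp
      right_inv := fun k => by ext; simp [Nat.add_sub_cancel' k.2] } _).symm

theorem Antitone.tsum_sq_add_le_of_add_le_mul {c : ℕ → ℝ} (hmono : Antitone c) (hc : ∀ n, 0 ≤ c n)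
    {t : ℕ} (ht : 0 < t) {q : ℝ} (hq0 : 0 ≤ q) (hq1 : q < 1)
    (hdecay : ∀ n, c (n + t) ≤ q * c n) (a : ℕ) :
    ∑' m, c (a + m) ^ 2 ≤ c a ^ 2 * ((1 - q ^ 2)⁻¹ * t) := by
  have hq2 : q ^ 2 < 1 := by nlinarith
  have hmaj := (hasSum_pow_div (sq_nonneg q) hq2 ht).mul_left (c a ^ 2)
  have hbound : ∀ m, c (a + m) ^ 2 ≤ c a ^ 2 * (q ^ 2) ^ (m / t) := fun m =>
    calc c (a + m) ^ 2 ≤ (q ^ (m / t) * c a) ^ 2 :=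
          pow_le_pow_left₀ (hc _) (hmono.le_pow_div_mul_of_add_le_mul hq0 hdecay a m) 2
      _ = c a ^ 2 * (q ^ 2) ^ (m / t) := by ring
  rw [← hmaj.tsum_eq]
  exact Summable.tsum_le_tsum hbound
    (.of_nonneg_of_le (fun _ => sq_nonneg _) hbound hmaj.summable) hmaj.summable

theorem tail_l2_norm_bound_explicit_general (c : ℕ → ℝ) (t : ℕ) (lam S : ℝ) (i : ℕ)
    (hc : ∀ n, 0 ≤ c n) (hmono : Antitone c) (ht : 1 ≤ t)
    (hlam : 0 < lam) (hS : lam ≤ S)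
    (hdecay : ∀ n, c (n + t) ≤ (1 - lam / S) * c n) :
    Real.sqrt (∑' k : {k : ℕ // i + t * ⌈S / lam⌉₊ ≤ k}, c k ^ 2) ≤
      c i * Real.exp (-1) * Real.sqrt (t * S / lam) := by
  set x := lam / S
  have hx0 : 0 < x := div_pos hlam (hlam.trans_le hS)
  have hx1 : x ≤ 1 := div_le_one_of_le₀ hS (hlam.trans_le hS).le
  have hq2 : x ≤ 1 - (1 - x) ^ 2 := by nlinarith
  have hceil : S / lam = x⁻¹ := (inv_div lam S).symm
  set N := i + t * ⌈S / lam⌉₊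
  have hcN : c N ≤ c i * exp (-1) :=
    calc c N ≤ (1 - x) ^ ⌈S / lam⌉₊ * c i :=
          le_pow_mul_of_add_le_mul (by linarith) hdecay i _
      _ ≤ exp (-1) * c i := by
          rw [hceil]; gcongr; exacts [hc i, one_sub_pow_ceil_inv_le_exp_neg_one hx0 hx1]
      _ = c i * exp (-1) := mul_comm _ _
  have hsum : ∑' k : {k : ℕ // N ≤ k}, c k ^ 2 ≤ c N ^ 2 * (t * S / lam) :=
    calc ∑' k : {k : ℕ // N ≤ k}, c k ^ 2 = ∑' m, c (N + m) ^ 2 :=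
          tsum_subtype_le_eq_tsum_add (fun k => c k ^ 2) N
      _ ≤ c N ^ 2 * ((1 - (1 - x) ^ 2)⁻¹ * t) :=
          hmono.tsum_sq_add_le_of_add_le_mul hc ht (by linarith) (by linarith) hdecay N
      _ ≤ c N ^ 2 * (t * S / lam) := by
          rw [mul_div_assoc, hceil, mul_comm (t : ℝ)]
          gcongr
  calc √(∑' k : {k : ℕ // N ≤ k}, c k ^ 2) ≤ √(c N ^ 2 * (t * S / lam)) := sqrt_le_sqrt hsum
    _ = c N * √(t * S / lam) := by rw [sqrt_mul (sq_nonneg _), sqrt_sq (hc N)]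
    _ ≤ c i * exp (-1) * √(t * S / lam) := by gcongr

/-- Tail ℓ² bound with the explicit auxiliary hypothesis: if `c (i+t) ≤ (1 − λ/S) c i`
for all `i`, `0 < λ ≤ S`, `t ≥ 1`, `T = t ⌈S/λ⌉`, and `1 − (1 − λ/S)² ≥ λ/S`, then
`‖c_Z‖₂ ≤ c i e⁻¹ √(t S / λ)` where `Z = {k : k ≥ i + T}`. -/
theorem tail_l2_norm_bound_explicit (c : ℕ → ℝ) (t : ℕ) (lam S : ℝ) (i : ℕ)
    (hc : ∀ n, 0 ≤ c n) (hmono : Antitone c) (ht : 1 ≤ t)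
    (hlam : 0 < lam) (hS : lam ≤ S)
    (hdecay : ∀ n, c (n + t) ≤ (1 - lam / S) * c n)
    (hq : lam / S ≤ 1 - (1 - lam / S) ^ 2) :
    Real.sqrt (∑' k : {k : ℕ // i + t * ⌈S / lam⌉₊ ≤ k}, c k ^ 2) ≤
      c i * Real.exp (-1) * Real.sqrt (t * S / lam) :=
  tail_l2_norm_bound_explicit_general c t lam S i hc hmono ht hlam hS hdecay
end
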